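/- arXiv:2209.02525 — 2 statements merged into one kernel-verified Lean document; each statement's English description precedes it below -/
import Mathlib

section
/- Let $\mu^m$ be a probability measure on $\mathcal{X}^m$, $\pi$ a probability measure on $\mathcal{H}$, and for each $s\in\mathcal{X}^m$ let $\rho^s$ be a probability measure on $\mathcal{H}$ absolutely continuous with respect to $\pi$ (forming a Markov kernel). Let $\Psi:\mathbb{R}^2\to\mathbb{R}$ be measurable and set $\xi = \int_{\mathcal{X}^m\times\mathcal{H}} e^{\Psi(\mathcal{L}_s(h),\mathcal{L}_{\mathcal{X}}(h))}\,\mathrm{d}\mu^m(s)\,\mathrm{d}\pi(h) < \infty$. Then for any $\delta\in(0,1)$, with probability at least $1-\delta$ over $(s,h)$ drawn from the joint law $\mathrm{d}\mu^m(s)\mathrm{d}\rho^s(h)$, $\Psi(\mathcal{L}_s(h), \mathcal{L}_{\mathcal{X}}(h)) \le \log\tfrac{\mathrm{d}\rho^s}{\mathrm{d}\pi}(h) + \log\tfrac{\xi}{\delta}$. -/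
open MeasureTheory ProbabilityTheory

/-- Proposition 1: disintegrated PAC-Bayes bound (Rivasplata et al.). -/
theorem disintegrated_pac_bayes
    {S H : Type*} [MeasurableSpace S] [MeasurableSpace H]
    (μm : Measure S) [IsProbabilityMeasure μm]
    (pr : Measure H) [IsProbabilityMeasure pr]
    (ρ : Kernel S H) [IsMarkovKernel ρ]
    (habs : ∀ s, ρ s ≪ pr)
    (Ls LX : S → H → ℝ)
    (hLs : Measurable (fun p : S × H => Ls p.1 p.2))
    (hLX : Measurable (fun p : S × H => LX p.1 p.2))
    (Ψ : ℝ × ℝ → ℝ) (hΨ : Measurable Ψ)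
    (ξ : ℝ)
    (hξ : ξ = ∫ p, Real.exp (Ψ (Ls p.1 p.2, LX p.1 p.2)) ∂(μm.prod pr))
    (hint : Integrable (fun p : S × H => Real.exp (Ψ (Ls p.1 p.2, LX p.1 p.2))) (μm.prod pr))
    (δ : ℝ) (hδ : δ ∈ Set.Ioo (0:ℝ) 1) :
    (μm ⊗ₘ ρ) {p : S × H |
        Ψ (Ls p.1 p.2, LX p.1 p.2)
          ≤ Real.log ((ρ p.1).rnDeriv pr p.2).toReal + Real.log (ξ / δ)}
      ≥ ENNReal.ofReal (1 - δ) := by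
  obtain ⟨hδ0, hδ1⟩ := hδ
  have hΨm : Measurable (fun p : S × H => Ψ (Ls p.1 p.2, LX p.1 p.2)) :=
    hΨ.comp (hLs.prodMk hLX)
  -- ξ > 0
  have hξpos : 0 < ξ := by
    rw [hξ]; exact integral_exp_pos hint
  -- the "bad" set per sample s
  set c : ℝ := Real.log (ξ / δ) with hc
  set bad : S → Set H := fun s =>
    {h | c + Real.log ((ρ s).rnDeriv pr h).toReal < Ψ (Ls s h, LX s h)} with hbad
  have hbadm : ∀ s, MeasurableSet (bad s) := by
    intro s
    have h1 : Measurable fun h => Ψ (Ls s h, LX s h) :=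
      hΨm.comp measurable_prodMk_left
    have h2 : Measurable fun h => c + Real.log ((ρ s).rnDeriv pr h).toReal :=
      measurable_const.add ((Measure.measurable_rnDeriv _ _).ennreal_toReal.log)
    exact measurableSet_lt h2 h1
  -- pointwise bound on rnDeriv over the bad set
  have key : ∀ s, ∀ᵐ h ∂pr, h ∈ bad s →
      (ρ s).rnDeriv pr h
        ≤ ENNReal.ofReal (δ / ξ) * ENNReal.ofReal (Real.exp (Ψ (Ls s h, LX s h))) := by
    intro s
    filter_upwards [Measure.rnDeriv_lt_top (ρ s) pr] with h hlt hmem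
    set r := (ρ s).rnDeriv pr h with hr
    rcases eq_or_ne r 0 with h0 | h0
    · simp [h0]
    · have hrt : 0 < r.toReal := ENNReal.toReal_pos h0 hlt.ne
      have hlog : Real.log r.toReal < Ψ (Ls s h, LX s h) - c := by
        have := hmem
        simp only [bad, Set.mem_setOf_eq] at this
        linarith
      have hlt2 : r.toReal < Real.exp (Ψ (Ls s h, LX s h) - c) :=
        (Real.log_lt_iff_lt_exp hrt).mp hlog
      have hexpc : Real.exp (-c) = δ / ξ := by
        rw [hc, Real.exp_neg, Real.exp_log (div_pos hξpos hδ0), inv_div]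
      have hle : r.toReal ≤ δ / ξ * Real.exp (Ψ (Ls s h, LX s h)) := by
        have : Real.exp (Ψ (Ls s h, LX s h) - c)
            = Real.exp (Ψ (Ls s h, LX s h)) * Real.exp (-c) := by
          rw [← Real.exp_add]; ring_nf
        rw [this, hexpc] at hlt2
        linarith
      calc r = ENNReal.ofReal r.toReal := (ENNReal.ofReal_toReal hlt.ne).symm
        _ ≤ ENNReal.ofReal (δ / ξ * Real.exp (Ψ (Ls s h, LX s h))) :=
            ENNReal.ofReal_le_ofReal hle
        _ = ENNReal.ofReal (δ / ξ) * ENNReal.ofReal (Real.exp (Ψ (Ls s h, LX s h))) :=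
            ENNReal.ofReal_mul (by positivity)
  -- bound the ρ s-measure of the bad set
  have hbad_bound : ∀ s, ρ s (bad s)
      ≤ ENNReal.ofReal (δ / ξ) *
        ∫⁻ h, ENNReal.ofReal (Real.exp (Ψ (Ls s h, LX s h))) ∂pr := by
    intro s
    have h1 : ρ s (bad s) = ∫⁻ h in bad s, (ρ s).rnDeriv pr h ∂pr :=
      (Measure.setLIntegral_rnDeriv (habs s) _).symm
    rw [h1]
    calc ∫⁻ h in bad s, (ρ s).rnDeriv pr h ∂pr
        ≤ ∫⁻ h in bad s,
            ENNReal.ofReal (δ / ξ) * ENNReal.ofReal (Real.exp (Ψ (Ls s h, LX s h))) ∂pr := by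
          refine lintegral_mono_ae ?_
          exact (ae_restrict_iff' (hbadm s)).mpr (key s)
      _ ≤ ∫⁻ h, ENNReal.ofReal (δ / ξ) * ENNReal.ofReal (Real.exp (Ψ (Ls s h, LX s h))) ∂pr :=
          setLIntegral_le_lintegral _ _
      _ = ENNReal.ofReal (δ / ξ) *
            ∫⁻ h, ENNReal.ofReal (Real.exp (Ψ (Ls s h, LX s h))) ∂pr := by
          have hmeas : Measurable fun h : H => ENNReal.ofReal (Real.exp (Ψ (Ls s h, LX s h))) :=
            (hΨm.comp measurable_prodMk_left).exp.ennreal_ofReal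
          rw [lintegral_const_mul _ hmeas]
  -- integrate over s
  have hlint : ∫⁻ p, ENNReal.ofReal (Real.exp (Ψ (Ls p.1 p.2, LX p.1 p.2))) ∂(μm.prod pr)
      = ENNReal.ofReal ξ := by
    rw [hξ, ← ofReal_integral_eq_lintegral_ofReal hint]
    exact Filter.Eventually.of_forall fun p => (Real.exp_pos _).le
  have htotal : ∫⁻ s, ρ s (bad s) ∂μm ≤ ENNReal.ofReal δ := by
    calc ∫⁻ s, ρ s (bad s) ∂μm
        ≤ ∫⁻ s, ENNReal.ofReal (δ / ξ) *
            ∫⁻ h, ENNReal.ofReal (Real.exp (Ψ (Ls s h, LX s h))) ∂pr ∂μm :=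
          lintegral_mono hbad_bound
      _ = ENNReal.ofReal (δ / ξ) *
            ∫⁻ s, ∫⁻ h, ENNReal.ofReal (Real.exp (Ψ (Ls s h, LX s h))) ∂pr ∂μm := by
          rw [lintegral_const_mul]
          exact Measurable.lintegral_prod_right hΨm.exp.ennreal_ofReal
      _ = ENNReal.ofReal (δ / ξ) * ENNReal.ofReal ξ := by
          rw [← lintegral_prod _ hΨm.exp.ennreal_ofReal.aemeasurable, hlint]
      _ = ENNReal.ofReal δ := by
          rw [← ENNReal.ofReal_mul (by positivity), div_mul_cancel₀ _ hξpos.ne']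
  -- any measurable subset of the complement has measure ≤ δ
  set A : Set (S × H) := {p : S × H |
      Ψ (Ls p.1 p.2, LX p.1 p.2)
        ≤ Real.log ((ρ p.1).rnDeriv pr p.2).toReal + Real.log (ξ / δ)} with hA
  have hsub : ∀ N : Set (S × H), MeasurableSet N → N ⊆ Aᶜ →
      (μm ⊗ₘ ρ) N ≤ ENNReal.ofReal δ := by
    intro N hN hNsub
    rw [Measure.compProd_apply hN]
    refine le_trans (le_trans (lintegral_mono fun s => ?_) (lintegral_mono fun s =>
      measure_mono (fun h hh => hh))) htotal
    refine measure_mono fun h hh => ?_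
    have := hNsub hh
    simp only [hA, Set.mem_compl_iff, Set.mem_setOf_eq, not_le] at this
    simp only [hbad, Set.mem_setOf_eq]
    linarith
  -- conclude via outer regularity by measurable supersets
  have houter : (μm ⊗ₘ ρ) A = ⨅ (t) (_ : A ⊆ t) (_ : MeasurableSet t), (μm ⊗ₘ ρ) t :=
    measure_eq_iInf A
  rw [ge_iff_le, houter]
  refine le_iInf fun t => le_iInf fun hAt => le_iInf fun ht => ?_
  have hc1 : (μm ⊗ₘ ρ) tᶜ ≤ ENNReal.ofReal δ :=
    hsub tᶜ ht.compl (fun p hp hpA => hp (hAt hpA))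
  have hcompl : (μm ⊗ₘ ρ) t = 1 - (μm ⊗ₘ ρ) tᶜ := by
    rw [measure_compl ht (measure_ne_top _ _), measure_univ]
    exact (ENNReal.sub_sub_cancel ENNReal.one_ne_top prob_le_one).symm
  rw [hcompl]
  calc ENNReal.ofReal (1 - δ) = ENNReal.ofReal 1 - ENNReal.ofReal δ := by
        rw [ENNReal.ofReal_sub _ hδ0.le]
    _ ≤ 1 - (μm ⊗ₘ ρ) tᶜ := by
        rw [ENNReal.ofReal_one]
        exact tsub_le_tsub le_rfl hc1
end

section
/- Let $\mathcal{C}:\mathbb{R}^N\to\mathbb{R}$ be twice continuously differentiable and let $h_t$ solve $\partial_t h_t = -\nabla\mathcal{C}(h_t)$ on $[0,T]$ with $\nabla\mathcal{C}(h_t)\ne 0$ for all $t\in[0,T]$. Then $\int_0^T \Delta\mathcal{C}(h_t)\,\mathrm{d}t = \log\frac{\|\nabla\mathcal{C}(h_0)\|}{\|\nabla\mathcal{C}(h_T)\|} + \int_0^T \nabla\cdot\Big(\frac{\nabla\mathcal{C}(h_t)}{\|\nabla\mathcal{C}(h_t)\|}\Big)\,\|\nabla\mathcal{C}(h_t)\|\,\mathrm{d}t$.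 -/
/-!
With `g = ∇𝒞`, the Laplacian is `∇ · g`, and the product rule `∇ · (φ v) = φ ∇ · v + ∇φ · v`
applied to `φ = ‖g‖⁻¹` gives `‖g‖ ∇ · (g / ‖g‖) = Δ𝒞 - ⟪g, Dg g⟫ / ‖g‖²`. Along the flow
`ḣ = -g(h)` the last term is `-(d/dt) log ‖g(hₜ)‖`, so integrating over `[0, T]` yields the
logarithm of `‖g(h₀)‖ / ‖g(h_T)‖`.
-/

/-- Laplacian of a function on Euclidean space: sum of second partial derivatives. -/
noncomputable def laplacian {ι : Type*} [Fintype ι] [DecidableEq ι]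
    (C : EuclideanSpace ℝ ι → ℝ) (h : EuclideanSpace ℝ ι) : ℝ :=
  ∑ i, fderiv ℝ (fun x => fderiv ℝ C x (EuclideanSpace.single i 1)) h
        (EuclideanSpace.single i 1)

/-- Divergence of a vector field on Euclidean space. -/
noncomputable def divergence {ι : Type*} [Fintype ι] [DecidableEq ι]
    (v : EuclideanSpace ℝ ι → EuclideanSpace ℝ ι) (h : EuclideanSpace ℝ ι) : ℝ :=
  ∑ i, fderiv ℝ (fun x => v x i) h (EuclideanSpace.single i 1)

open Set MeasureTheory RealInnerProductSpace

section InnerProductSpace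

variable {E F : Type*} [NormedAddCommGroup E] [InnerProductSpace ℝ E]
  [NormedAddCommGroup F] [InnerProductSpace ℝ F]

theorem HasFDerivAt.norm {f : E → F} {f' : E →L[ℝ] F} {x : E} (hf : HasFDerivAt f f' x)
    (hx : f x ≠ 0) :
    HasFDerivAt (‖f ·‖) (‖f x‖⁻¹ • (innerSL ℝ (f x)).comp f') x := by
  have hsq : ‖f x‖ ^ 2 ≠ 0 := by positivity
  convert hf.norm_sq.sqrt hsq using 1
  · simp [Real.sqrt_sq (norm_nonneg _)]
  · ext v
    simp only [smul_apply, ContinuousLinearMap.comp_apply, coe_innerSL_apply, smul_eq_mul,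
      Real.sqrt_sq (norm_nonneg _), one_div, mul_inv_rev, nsmul_eq_mul, Nat.cast_ofNat]
    field_simp

theorem ContDiff.gradient [CompleteSpace E] {C : E → ℝ} {n : WithTop ℕ∞}
    (hC : ContDiff ℝ (n + 1) C) : ContDiff ℝ n (gradient C) :=
  (InnerProductSpace.toDual ℝ E).symm.contDiff.comp (hC.fderiv_right le_rfl)

variable {g : E → F} {γ γ' : ℝ → E}

theorem HasFDerivAt.hasDerivAt_log_norm_comp {g' : E →L[ℝ] F} {t : ℝ} {v : E}
    (hg : HasFDerivAt g g' (γ t)) (hγ : HasDerivAt γ v t) (hne : g (γ t) ≠ 0) :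
    HasDerivAt (fun s => Real.log ‖g (γ s)‖) (⟪g (γ t), g' v⟫ / ‖g (γ t)‖ ^ 2) t := by
  refine (((hg.norm hne).comp_hasDerivAt t hγ).log (norm_ne_zero_iff.mpr hne)).congr_deriv ?_
  simp only [smul_apply, ContinuousLinearMap.comp_apply, coe_innerSL_apply, smul_eq_mul,
    Function.comp_apply]
  field_simp

theorem continuousOn_inner_fderiv_div_norm_sq {s : Set ℝ} (hg : ContDiff ℝ 1 g)
    (hγ : ContinuousOn γ s) (hγ' : ContinuousOn γ' s) (hne : ∀ t ∈ s, g (γ t) ≠ 0) :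
    ContinuousOn (fun t => ⟪g (γ t), fderiv ℝ g (γ t) (γ' t)⟫ / ‖g (γ t)‖ ^ 2) s := by
  have hgγ := hg.continuous.comp_continuousOn hγ
  refine ContinuousOn.div (hgγ.inner ?_) (hgγ.norm.pow 2) fun t ht => by simpa using hne t ht
  exact ((hg.continuous_fderiv one_ne_zero).comp_continuousOn hγ).clm_apply hγ'

theorem integral_inner_fderiv_div_norm_sq_eq_sub_log_norm {a b : ℝ} (hg : ContDiff ℝ 1 g)
    (hγ : ∀ t ∈ uIcc a b, HasDerivAt γ (γ' t) t) (hγ' : ContinuousOn γ' (uIcc a b))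
    (hne : ∀ t ∈ uIcc a b, g (γ t) ≠ 0) :
    ∫ t in a..b, ⟪g (γ t), fderiv ℝ g (γ t) (γ' t)⟫ / ‖g (γ t)‖ ^ 2
      = Real.log ‖g (γ b)‖ - Real.log ‖g (γ a)‖ := by
  have hγc : ContinuousOn γ (uIcc a b) := fun t ht => (hγ t ht).continuousAt.continuousWithinAt
  refine intervalIntegral.integral_eq_sub_of_hasDerivAt (f := fun s => Real.log ‖g (γ s)‖)
    (fun t ht => ?_) (continuousOn_inner_fderiv_div_norm_sq hg hγc hγ' hne).intervalIntegrable
  exact (hg.differentiable one_ne_zero _).hasFDerivAt.hasDerivAt_log_norm_comp (hγ t ht)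
    (hne t ht)

end InnerProductSpace

section Euclidean

variable {ι : Type*} [Fintype ι] {f : EuclideanSpace ℝ ι → ℝ}
  {g : EuclideanSpace ℝ ι → EuclideanSpace ℝ ι} {x : EuclideanSpace ℝ ι}

theorem HasFDerivAt.euclideanSpace_apply {g' : EuclideanSpace ℝ ι →L[ℝ] EuclideanSpace ℝ ι}
    (hg : HasFDerivAt g g' x) (i : ι) :
    HasFDerivAt (fun y => g y i) ((EuclideanSpace.proj i).comp g') x :=
  (PiLp.hasFDerivAt_apply (𝕜 := ℝ) 2 (g x) i).comp x hg

variable [DecidableEq ι]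

theorem EuclideanSpace.sum_mul_apply_single (L : EuclideanSpace ℝ ι →L[ℝ] ℝ)
    (v : EuclideanSpace ℝ ι) : ∑ i, v i * L (EuclideanSpace.single i 1) = L v := by
  conv_rhs => rw [← (EuclideanSpace.basisFun ι ℝ).sum_repr v]
  simp

theorem divergence_eq_sum_fderiv_apply (hg : DifferentiableAt ℝ g x) :
    divergence g x = ∑ i, fderiv ℝ g x (EuclideanSpace.single i 1) i := by
  refine Finset.sum_congr rfl fun i _ => ?_
  rw [(hg.hasFDerivAt.euclideanSpace_apply i).fderiv]
  rfl

theorem divergence_smul (hf : DifferentiableAt ℝ f x) (hg : DifferentiableAt ℝ g x) :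
    divergence (fun y => f y • g y) x = f x * divergence g x + fderiv ℝ f x (g x) := by
  have hcoord (i : ι) : HasFDerivAt (fun y => f y * g y i)
      (f x • (EuclideanSpace.proj i).comp (fderiv ℝ g x) + g x i • fderiv ℝ f x) x :=
    hf.hasFDerivAt.mul (hg.hasFDerivAt.euclideanSpace_apply i)
  rw [divergence_eq_sum_fderiv_apply hg, Finset.mul_sum,
    ← EuclideanSpace.sum_mul_apply_single _ (g x), ← Finset.sum_add_distrib]
  refine Finset.sum_congr rfl fun i _ => ?_
  simp [(hcoord i).fderiv]

theorem divergence_inv_norm_smul_mul_norm (hg : DifferentiableAt ℝ g x) (hx : g x ≠ 0) :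
    divergence (fun y => ‖g y‖⁻¹ • g y) x * ‖g x‖
      = divergence g x - ⟪g x, fderiv ℝ g x (g x)⟫ / ‖g x‖ ^ 2 := by
  have hnorm : HasFDerivAt (fun y => ‖g y‖⁻¹) _ x :=
    (hasDerivAt_inv (norm_ne_zero_iff.mpr hx)).comp_hasFDerivAt x (hg.hasFDerivAt.norm hx)
  rw [divergence_smul hnorm.differentiableAt hg, hnorm.fderiv]
  simp only [neg_smul, neg_apply, smul_apply, ContinuousLinearMap.comp_apply, coe_innerSL_apply,
    smul_eq_mul]
  field_simp
  ring

theorem laplacian_eq_divergence_gradient (C : EuclideanSpace ℝ ι → ℝ) :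
    laplacian C = divergence (gradient C) := by
  ext x
  refine Finset.sum_congr rfl fun i _ => ?_
  congr 2
  ext y
  simp [← inner_gradient_left, EuclideanSpace.inner_single_right]

theorem continuous_laplacian {C : EuclideanSpace ℝ ι → ℝ} (hC : ContDiff ℝ 2 C) :
    Continuous (laplacian C) := by
  refine continuous_finsetSum _ fun i _ => ?_
  have hCi : ContDiff ℝ 1 fun y => fderiv ℝ C y (EuclideanSpace.single i 1) :=
    (hC.fderiv_right le_rfl).clm_apply contDiff_const
  exact (hCi.continuous_fderiv one_ne_zero).clm_apply continuous_const

end Euclidean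

/-- Decomposition of the Laplacian's integral along a gradient-flow trajectory
(equation (5) of the paper). -/
theorem laplacian_integral_decomposition
    {N : ℕ} (C : EuclideanSpace ℝ (Fin N) → ℝ) (hC : ContDiff ℝ 2 C)
    (T : ℝ) (hT : 0 < T) (h : ℝ → EuclideanSpace ℝ (Fin N))
    (hflow : ∀ t ∈ Set.Icc (0:ℝ) T, HasDerivAt h (-(gradient C (h t))) t)
    (hne : ∀ t ∈ Set.Icc (0:ℝ) T, gradient C (h t) ≠ 0) :
    (∫ t in (0:ℝ)..T, laplacian C (h t))
      = Real.log (‖gradient C (h 0)‖ / ‖gradient C (h T)‖)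
        + ∫ t in (0:ℝ)..T,
            divergence (fun x => ‖gradient C x‖⁻¹ • gradient C x) (h t)
              * ‖gradient C (h t)‖ := by
  rw [← uIcc_of_le hT.le] at hflow hne
  have hg : ContDiff ℝ 1 (gradient C) := hC.gradient
  have hh : ContinuousOn h (uIcc 0 T) := fun t ht => (hflow t ht).continuousAt.continuousWithinAt
  have hflow_cont : ContinuousOn (fun t => -gradient C (h t)) (uIcc 0 T) :=
    (hg.continuous.comp_continuousOn hh).neg
  have hL : IntervalIntegrable (fun t => laplacian C (h t)) volume 0 T :=
    ((continuous_laplacian hC).comp_continuousOn hh).intervalIntegrable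
  have hK := (continuousOn_inner_fderiv_div_norm_sq hg hh hflow_cont hne).intervalIntegrable
    (μ := volume)
  have hpointwise : EqOn
      (fun t => divergence (fun x => ‖gradient C x‖⁻¹ • gradient C x) (h t) * ‖gradient C (h t)‖)
      (fun t => laplacian C (h t) + ⟪gradient C (h t),
        fderiv ℝ (gradient C) (h t) (-gradient C (h t))⟫ / ‖gradient C (h t)‖ ^ 2)
      (uIcc 0 T) := by
    intro t ht
    dsimp only
    rw [divergence_inv_norm_smul_mul_norm (hg.differentiable one_ne_zero _) (hne t ht),
      laplacian_eq_divergence_gradient, map_neg, inner_neg_right, neg_div, sub_eq_add_neg]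
  rw [intervalIntegral.integral_congr hpointwise, intervalIntegral.integral_add hL hK,
    integral_inner_fderiv_div_norm_sq_eq_sub_log_norm hg hflow hflow_cont hne,
    Real.log_div (norm_ne_zero_iff.mpr (hne 0 left_mem_uIcc))
      (norm_ne_zero_iff.mpr (hne T right_mem_uIcc))]
  ring
end
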